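/- arXiv:1701.06744 — 6 statements merged into one kernel-verified Lean document; each statement's English description precedes it below -/
import Mathlib

section
/- Let λ₁, λ₂, λ₃ ≥ 0 with λ₁² + λ₂² + λ₃² = 1. Then h((1 + √(1 - 4λ₁²λ₃²))/2) ≤ h(λ₁²), where h is the binary entropy function. (This shows the minimal control power of an extended GHZ state is h((1+√(1-4λ₁²λ₃²))/2).) -/
noncomputable def binEnt (x : ℝ) : ℝ := -(x * Real.logb 2 x) - (1 - x) * Real.logb 2 (1 - x)

lemma binEnt_eq (x : ℝ) : binEnt x = Real.binEntropy x / Real.log 2 := by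
  unfold binEnt Real.binEntropy
  rw [Real.log_inv, Real.log_inv, Real.logb, Real.logb]
  ring

theorem mcp_eGHZ (l1 l2 l3 : ℝ) (h1 : 0 ≤ l1) (h2 : 0 ≤ l2) (h3 : 0 ≤ l3)
    (hnorm : l1^2 + l2^2 + l3^2 = 1) :
    binEnt ((1 + Real.sqrt (1 - 4 * l1^2 * l3^2)) / 2) ≤ binEnt (l1^2) := by
  set a := l1^2 with ha
  set c := l3^2 with hc
  have ha0 : 0 ≤ a := sq_nonneg l1
  have hc0 : 0 ≤ c := sq_nonneg l3
  have hac : c ≤ 1 - a := by nlinarith [sq_nonneg l2]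
  have ha1 : a ≤ 1 := by nlinarith
  have key : (1 - 2*a)^2 ≤ 1 - 4*a*c := by nlinarith
  have h0le : 0 ≤ 1 - 4*a*c := le_trans (sq_nonneg _) key
  have hs1 : Real.sqrt (1 - 4*a*c) ≤ 1 := by
    have := Real.sqrt_le_sqrt (show 1 - 4*a*c ≤ 1 by nlinarith)
    simpa using this
  have hsabs : |1 - 2*a| ≤ Real.sqrt (1 - 4*a*c) := by
    rw [← Real.sqrt_sq_eq_abs]
    exact Real.sqrt_le_sqrt key
  set x := (1 + Real.sqrt (1 - 4*a*c)) / 2 with hx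
  have hx1 : x ≤ 1 := by rw [hx]; linarith
  -- binEntropy a = binEntropy (max a (1-a))
  have hsym : Real.binEntropy a = Real.binEntropy (max a (1-a)) := by
    rcases le_total a (1-a) with h | h
    · rw [max_eq_right h, Real.binEntropy_one_sub]
    · rw [max_eq_left h]
  have hm : max a (1-a) = (1 + |1 - 2*a|)/2 := by
    rcases le_total a (1-a) with h | h
    · rw [max_eq_right h, abs_of_nonneg (by linarith)]; ring
    · rw [max_eq_left h, abs_of_nonpos (by linarith)]; ring
  have hmem1 : max a (1-a) ∈ Set.Icc (2⁻¹:ℝ) 1 := by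
    constructor
    · rw [hm]; rw [le_div_iff₀ (by norm_num)]; nlinarith [abs_nonneg (1-2*a)]
    · rcases le_total a (1-a) with h | h
      · rw [max_eq_right h]; linarith
      · rw [max_eq_left h]; exact ha1
  have hmem2 : x ∈ Set.Icc (2⁻¹:ℝ) 1 := by
    constructor
    · rw [hx, le_div_iff₀ (by norm_num)]; nlinarith [Real.sqrt_nonneg (1 - 4*a*c)]
    · exact hx1
  have hle : max a (1-a) ≤ x := by
    rw [hm, hx]; linarith
  have := Real.binEntropy_strictAntiOn.antitoneOn hmem1 hmem2 hle
  rw [binEnt_eq, binEnt_eq, hsym]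
  have hlog : (0:ℝ) < Real.log 2 := Real.log_pos (by norm_num)
  exact div_le_div_of_nonneg_right this hlog.le
end

section
/- Let λ₁, λ₃ ≥ 0 with 4λ₁²λ₃² ≤ 1 and λ₁² + λ₃² ≤ 1. Then the quantity P = h((1 + √(1 - 4λ₁²λ₃²))/2) equals 1 if and only if λ₁² = 1/2 and λ₃² = 1/2. -/
lemma binEnt_lt_one {x : ℝ} (hx : 1/2 < x) (hx1 : x < 1) : binEnt x < 1 := by
  have hl2 : (0:ℝ) < Real.log 2 := Real.log_pos (by norm_num)
  have hxpos : 0 < x := by linarith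
  have h1x : 0 < 1 - x := by linarith
  have h2x : (0:ℝ) < 2 * x := by linarith
  have h2x1 : (0:ℝ) < 2 * (1 - x) := by linarith
  have ha : Real.log ((2*x)⁻¹) < (2*x)⁻¹ - 1 := by
    apply Real.log_lt_sub_one_of_pos (by positivity)
    intro h
    have : (2*x) = 1 := by
      field_simp at h; linarith
    linarith
  have hb : Real.log ((2*(1-x))⁻¹) < (2*(1-x))⁻¹ - 1 := by
    apply Real.log_lt_sub_one_of_pos (by positivity)
    intro h
    have : (2*(1-x)) = 1 := by
      field_simp at h; linarith
    linarith
  rw [Real.log_inv] at ha hb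
  have ha' : x * Real.log (2*x) > x - 1/2 := by
    have h' : -Real.log (2*x) < (2*x)⁻¹ - 1 := ha
    have := mul_lt_mul_of_pos_left h' hxpos
    have hinv : x * (2*x)⁻¹ = 1/2 := by field_simp
    nlinarith [this]
  have hb' : (1-x) * Real.log (2*(1-x)) > (1-x) - 1/2 := by
    have h' : -Real.log (2*(1-x)) < (2*(1-x))⁻¹ - 1 := hb
    have := mul_lt_mul_of_pos_left h' h1x
    have hinv : (1-x) * (2*(1-x))⁻¹ = 1/2 := by field_simp
    nlinarith [this]
  rw [Real.log_mul (by norm_num) (ne_of_gt hxpos)] at ha'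
  rw [Real.log_mul (by norm_num) (ne_of_gt h1x)] at hb'
  have key : x * Real.log x + (1-x) * Real.log (1-x) > -Real.log 2 := by nlinarith
  have : binEnt x = -(x * Real.log x + (1-x) * Real.log (1-x)) / Real.log 2 := by
    unfold binEnt Real.logb
    field_simp
    ring
  rw [this]
  rw [div_lt_one hl2]
  linarith

lemma binEnt_half : binEnt (1/2) = 1 := by
  unfold binEnt
  have : Real.logb 2 (1/2 : ℝ) = -1 := by
    rw [show (1/2 : ℝ) = 2⁻¹ by norm_num, Real.logb_inv, Real.logb_self_eq_one] <;> norm_num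
  rw [show (1 : ℝ) - 1/2 = 1/2 by norm_num, this]
  norm_num

theorem mcp_eGHZ_eq_one_iff (l1 l3 : ℝ) (h1 : 0 ≤ l1) (h3 : 0 ≤ l3)
    (hb : 4 * l1^2 * l3^2 ≤ 1) (hsum : l1^2 + l3^2 ≤ 1) :
    binEnt ((1 + Real.sqrt (1 - 4 * l1^2 * l3^2)) / 2) = 1 ↔ l1^2 = 1/2 ∧ l3^2 = 1/2 := by
  set s := Real.sqrt (1 - 4 * l1^2 * l3^2) with hs
  have hs0 : 0 ≤ s := Real.sqrt_nonneg _
  have hs1 : s ≤ 1 := by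
    have := Real.sqrt_le_sqrt (show 1 - 4 * l1^2 * l3^2 ≤ 1 by nlinarith)
    simpa [hs] using this
  constructor
  · intro hE
    have hse : s = 0 := by
      by_contra hne
      have hspos : 0 < s := lt_of_le_of_ne hs0 (Ne.symm hne)
      rcases lt_or_eq_of_le hs1 with hlt | heq
      · have := binEnt_lt_one (x := (1+s)/2) (by linarith) (by linarith)
        linarith [this, hE.ge]
      · rw [heq] at hE
        norm_num [binEnt] at hE
    have harg : 1 - 4 * l1^2 * l3^2 = 0 := by
      have := Real.sqrt_eq_zero'.mp (hs ▸ hse)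
      nlinarith [Real.sq_sqrt (show (0:ℝ) ≤ 1 - 4 * l1^2 * l3^2 by linarith), hse]
    constructor <;> nlinarith [sq_nonneg (l1^2 - l3^2), sq_nonneg (l1^2 + l3^2 - 1)]
  · rintro ⟨e1, e3⟩
    rw [hs, e1, e3]
    norm_num
    exact binEnt_half
end

section
/- Let λ₁, λ₂, λ₃ ≥ 0 with λ₁² + λ₂² + λ₃² = 1, all λᵢ > 0. Then there exists a permutation (j,k,l) of (1,2,3) with λₗ² = max{λ₁²,λ₂²,λ₃²} such that min over permutations of (λⱼ² + λₖ²)·h(λⱼ²/(λⱼ² + λₖ²)) is attained at (j,k,l); equivalently, for any permutations (j,k,l) and (j',k',l'), if λₗ² ≥ λₗ'² then (λⱼ²+λₖ²)·h(λⱼ²/(λⱼ²+λₖ²)) ≤ (λⱼ'²+λₖ'²)·h(λⱼ'²/(λⱼ'²+λₖ'²)). -/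
/-- Control power of the generalized W state for the permutation σ, where the
controller holds qubit σ 0 wait -- here σ 0 = j, σ 1 = k, σ 2 = l. -/
noncomputable def cpW (l : Fin 3 → ℝ) (σ : Equiv.Perm (Fin 3)) : ℝ :=
  ((l (σ 0))^2 + (l (σ 1))^2) * binEnt ((l (σ 0))^2 / ((l (σ 0))^2 + (l (σ 1))^2))

/-!
By the grouping property of entropy, `(a + b) h(a / (a + b)) = H(a, b, c) - h(c)` whenever
`a + b + c = 1`, so the control power for `(j, k, l)` is the Shannon entropy of the
distribution `(λ₁², λ₂², λ₃²)`, which does not depend on the permutation, minus `h(λₗ²)`.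
Minimising it means maximising `h(λₗ²)`. If `λₗ'² ≤ λₗ²` for distinct indices then also
`λₗ'² ≤ 1 - λₗ²`, and since `h` is increasing on `[0, 1/2]` and symmetric about `1/2`, this
gives `h(λₗ'²) ≤ h(λₗ²)`.
-/

open Real

lemma binEnt_eq_binEntropy_div_log_two (x : ℝ) : binEnt x = binEntropy x / log 2 := by
  simp only [binEnt, binEntropy, logb, log_inv]
  ring

lemma binEntropy_le_of_le_of_le_one_sub {x y : ℝ} (hy : 0 ≤ y) (hyx : y ≤ x)
    (hyx' : y ≤ 1 - x) : binEntropy y ≤ binEntropy x := by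
  rcases le_or_gt x 2⁻¹ with hx | hx
  · exact binEntropy_strictMonoOn.monotoneOn ⟨hy, hyx.trans hx⟩ ⟨hy.trans hyx, hx⟩ hyx
  · rw [← binEntropy_one_sub x]
    exact binEntropy_strictMonoOn.monotoneOn ⟨hy, by linarith⟩ ⟨by linarith, by linarith⟩ hyx'

lemma mul_binEntropy_div_add (a b : ℝ) :
    (a + b) * binEntropy (a / (a + b)) = negMulLog a + negMulLog b - negMulLog (a + b) := by
  rcases eq_or_ne (a + b) 0 with hab | hab
  -- `Real.log` is even, so `negMulLog` is odd and both sides vanish.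
  · obtain rfl : b = -a := by linarith
    simp [negMulLog, log_neg_eq_log]
  · have ha :
        negMulLog a = (a + b) * negMulLog (a / (a + b)) + a / (a + b) * negMulLog (a + b) := by
      rw [← negMulLog_mul, div_mul_cancel₀ a hab]
    have hb : negMulLog b =
        (a + b) * negMulLog (1 - a / (a + b)) + (1 - a / (a + b)) * negMulLog (a + b) := by
      rw [← negMulLog_mul]
      congr 1
      field_simp
      ring
    rw [binEntropy_eq_negMulLog_add_negMulLog_one_sub, ha, hb]
    ring

lemma sq_add_sq_le_one_of_ne {ι : Type*} [Fintype ι] {l : ι → ℝ} (hnorm : ∑ i, l i ^ 2 = 1)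
    {i j : ι} (hij : i ≠ j) : l i ^ 2 + l j ^ 2 ≤ 1 := by
  classical
  rw [← Finset.sum_pair (f := fun i ↦ l i ^ 2) hij, ← hnorm]
  exact Finset.sum_le_univ_sum_of_nonneg fun _ ↦ sq_nonneg _

lemma sum_perm_fin_three {M : Type*} [AddCommMonoid M] (f : Fin 3 → M) (σ : Equiv.Perm (Fin 3)) :
    f (σ 0) + f (σ 1) + f (σ 2) = ∑ i, f i := by
  rw [← Equiv.sum_comp σ, Fin.sum_univ_three]

lemma cpW_eq_sub_binEntropy (l : Fin 3 → ℝ) (hnorm : ∑ i, l i ^ 2 = 1)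
    (σ : Equiv.Perm (Fin 3)) :
    cpW l σ = (∑ i, negMulLog (l i ^ 2) - binEntropy (l (σ 2) ^ 2)) / log 2 := by
  have hrest : l (σ 0) ^ 2 + l (σ 1) ^ 2 = 1 - l (σ 2) ^ 2 := by
    rw [← hnorm, ← sum_perm_fin_three (fun i ↦ l i ^ 2) σ]
    ring
  rw [cpW, binEnt_eq_binEntropy_div_log_two, mul_div_assoc', mul_binEntropy_div_add,
    ← sum_perm_fin_three (fun i ↦ negMulLog (l i ^ 2)) σ, hrest,
    binEntropy_eq_negMulLog_add_negMulLog_one_sub]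
  ring

theorem mcp_gW_attained_at_max_general (l : Fin 3 → ℝ)
    (hnorm : (l 0)^2 + (l 1)^2 + (l 2)^2 = 1) :
    ∀ σ σ' : Equiv.Perm (Fin 3),
      (l (σ' 2))^2 ≤ (l (σ 2))^2 → cpW l σ ≤ cpW l σ' := by
  rw [← Fin.sum_univ_three (fun i ↦ l i ^ 2)] at hnorm
  intro σ σ' hle
  rw [cpW_eq_sub_binEntropy l hnorm, cpW_eq_sub_binEntropy l hnorm]
  rcases eq_or_ne (σ' 2) (σ 2) with heq | hne
  · rw [heq]
  · have hsum := sq_add_sq_le_one_of_ne hnorm hne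
    have hent := binEntropy_le_of_le_of_le_one_sub (sq_nonneg _) hle (by linarith)
    gcongr

theorem mcp_gW_attained_at_max (l : Fin 3 → ℝ) (hpos : ∀ i, 0 < l i)
    (hnorm : (l 0)^2 + (l 1)^2 + (l 2)^2 = 1) :
    ∀ σ σ' : Equiv.Perm (Fin 3),
      (l (σ' 2))^2 ≤ (l (σ 2))^2 → cpW l σ ≤ cpW l σ' :=
  mcp_gW_attained_at_max_general l hnorm
end

section
/- There do not exist real numbers λ₁, λ₂, λ₃ ≥ 0 with λ₁² + λ₂² + λ₃² = 1 such that (λⱼ² + λₖ²)·h(λⱼ²/(λⱼ² + λₖ²)) > 2/3 for every pair of distinct indices j, k ∈ {1,2,3}. -/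
lemma binEnt_le_one (x : ℝ) : binEnt x ≤ 1 := by
  have h := Real.binEntropy_le_log_two (p := x)
  have hlog : (0:ℝ) < Real.log 2 := Real.log_pos (by norm_num)
  have heq : binEnt x = Real.binEntropy x / Real.log 2 := by
    unfold binEnt Real.binEntropy Real.logb
    rw [Real.log_inv, Real.log_inv]
    field_simp
    ring
  rw [heq, div_le_one hlog]
  exact h

theorem no_gW_all_cp_gt_two_thirds :
    ¬ ∃ l : Fin 3 → ℝ, (∀ i, 0 ≤ l i) ∧ (l 0)^2 + (l 1)^2 + (l 2)^2 = 1 ∧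
      ∀ j k : Fin 3, j ≠ k →
        ((l j)^2 + (l k)^2) * binEnt ((l j)^2 / ((l j)^2 + (l k)^2)) > 2/3 := by
  rintro ⟨l, _, hsum, hcp⟩
  have key : ∀ j k : Fin 3, ((l j)^2 + (l k)^2) * binEnt ((l j)^2 / ((l j)^2 + (l k)^2))
      ≤ (l j)^2 + (l k)^2 := by
    intro j k
    have hnn : (0:ℝ) ≤ (l j)^2 + (l k)^2 := by positivity
    calc ((l j)^2 + (l k)^2) * binEnt ((l j)^2 / ((l j)^2 + (l k)^2))
        ≤ ((l j)^2 + (l k)^2) * 1 := by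
          exact mul_le_mul_of_nonneg_left (binEnt_le_one _) hnn
      _ = (l j)^2 + (l k)^2 := mul_one _
  have h01 := lt_of_lt_of_le (hcp 0 1 (by decide)) (key 0 1)
  have h02 := lt_of_lt_of_le (hcp 0 2 (by decide)) (key 0 2)
  have h12 := lt_of_lt_of_le (hcp 1 2 (by decide)) (key 1 2)
  linarith
end

section
/- Let λ₁ ∈ [0,1] and λ₃² = 1 - λ₁². For the generalized GHZ state λ₁|000⟩ + λ₃|111⟩, the channel capacity with assistance is C = 1 + h(λ₁²) and without assistance is 1, so the minimal control power equals h(λ₁²); in particular 0 ≤ h(λ₁²) ≤ 1 with value 1 iff λ₁² = 1/2. -/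
lemma binEnt_one_sub (x : ℝ) : binEnt (1 - x) = binEnt x := by
  rw [binEnt_eq, binEnt_eq, Real.binEntropy_one_sub]

theorem mcp_gGHZ (l1 l3 : ℝ) (h1 : l1 ∈ Set.Icc (0:ℝ) 1) (h3 : 0 ≤ l3)
    (hnorm : l3^2 = 1 - l1^2) :
    (1 + binEnt ((1 + Real.sqrt (1 - 4 * l1^2 * l3^2)) / 2) = 1 + binEnt (l1^2)) ∧
      ((1 + binEnt (l1^2)) - 1 = binEnt (l1^2)) ∧
      (0 ≤ binEnt (l1^2) ∧ binEnt (l1^2) ≤ 1) ∧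
      (binEnt (l1^2) = 1 ↔ l1^2 = 1/2) := by
  obtain ⟨h0, h1'⟩ := h1
  set a := l1^2 with ha
  have ha0 : 0 ≤ a := sq_nonneg l1
  have ha1 : a ≤ 1 := by nlinarith
  have hlog2 : (0:ℝ) < Real.log 2 := Real.log_pos (by norm_num)
  have hs : Real.sqrt (1 - 4 * l1^2 * l3^2) = |2 * a - 1| := by
    rw [hnorm, ← ha]
    rw [show 1 - 4 * a * (1 - a) = (2*a - 1)^2 by ring]
    exact Real.sqrt_sq_eq_abs _
  refine ⟨?_, by ring, ⟨?_, ?_⟩, ?_⟩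
  · rw [hs]
    rcases abs_cases (2 * a - 1) with ⟨he, _⟩ | ⟨he, _⟩
    · rw [he, show (1 + (2*a-1))/2 = a by ring]
    · rw [he, show (1 + -(2*a-1))/2 = 1 - a by ring, binEnt_one_sub]
  · rw [binEnt_eq]
    exact div_nonneg (Real.binEntropy_nonneg ha0 ha1) hlog2.le
  · rw [binEnt_eq, div_le_one hlog2]
    exact Real.binEntropy_le_log_two
  · rw [binEnt_eq, div_eq_one_iff_eq hlog2.ne', Real.binEntropy_eq_log_two]
    norm_num
end

section
/- The function f(a,b) = (a+b)·h(a/(a+b)) for a,b > 0 (with f extended by 0 when a+b=0) is monotonically increasing in b when a is fixed and a ≤ b. -/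
noncomputable def f (a b : ℝ) : ℝ := if a + b = 0 then 0 else (a + b) * binEnt (a / (a + b))

/-!
Clearing the denominator `a + b` turns `f a b * log 2` into
`(a + b) log (a + b) - a log a - b log b`, whose derivative in `b` is
`log (a + b) - log b ≥ 0`.
-/

open Real Set

lemma f_eq_of_pos {a b : ℝ} (ha : 0 < a) (hb : 0 < b) :
    f a b = ((a + b) * log (a + b) - b * log b - a * log a) / log 2 := by
  have hab : 0 < a + b := add_pos ha hb
  have hcompl : 1 - a / (a + b) = b / (a + b) := by field_simp; ring
  rw [f, if_neg hab.ne', binEnt, hcompl, logb, logb,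
    log_div ha.ne' hab.ne', log_div hb.ne' hab.ne']
  field_simp
  ring

lemma hasDerivAt_add_mul_log_sub_mul_log {a b : ℝ} (hb : b ≠ 0) (hab : a + b ≠ 0) :
    HasDerivAt (fun x ↦ (a + x) * log (a + x) - x * log x) (log (a + b) - log b) b := by
  have hshift : HasDerivAt (fun x ↦ (a + x) * log (a + x)) (log (a + b) + 1) b := by
    simpa [Function.comp_def] using
      (hasDerivAt_mul_log hab).comp b ((hasDerivAt_id b).const_add a)
  exact (hshift.sub (hasDerivAt_mul_log hb)).congr_deriv (by ring)

lemma monotoneOn_add_mul_log_sub_mul_log {a : ℝ} (ha : 0 ≤ a) :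
    MonotoneOn (fun x ↦ (a + x) * log (a + x) - x * log x) (Ioi 0) := by
  have hderiv : ∀ b ∈ Ioi (0 : ℝ), HasDerivAt (fun x ↦ (a + x) * log (a + x) - x * log x)
      (log (a + b) - log b) b := fun b hb ↦
    hasDerivAt_add_mul_log_sub_mul_log (ne_of_gt hb) (by simp only [mem_Ioi] at hb; linarith)
  refine monotoneOn_of_hasDerivWithinAt_nonneg (f' := fun b ↦ log (a + b) - log b) (convex_Ioi 0)
    (fun b hb ↦ (hderiv b hb).continuousAt.continuousWithinAt) (fun b hb ↦ ?_) (fun b hb ↦ ?_)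
  · rw [interior_Ioi] at hb ⊢
    exact (hderiv b hb).hasDerivWithinAt
  · rw [interior_Ioi, mem_Ioi] at hb
    exact sub_nonneg.2 (log_le_log hb (by linarith))

theorem f_mono_in_b (a : ℝ) (ha : 0 < a) :
    MonotoneOn (fun b => f a b) {b : ℝ | 0 < b ∧ a ≤ b} := by
  intro x hx y hy hxy
  simp only [f_eq_of_pos ha hx.1, f_eq_of_pos ha hy.1]
  gcongr ?_ / _
  exact sub_le_sub_right (monotoneOn_add_mul_log_sub_mul_log ha.le hx.1 hy.1 hxy) _
end
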